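/- Let d ≥ 1 and m ≥ 3^d + 4. If 𝔛 is an association scheme on [m]^d with T_m^d ≤ 𝔛 ≤ Ham(m, d), then 𝔛 = [m]^𝔖 for some set association scheme 𝔖 on [d]. -/

import Mathlib

/-!
Since `T_m^d ≤ 𝔛`, each cell `R` of `𝔛` is a union of the cells `{p | diffSet p = a}` of
`T_m^d`, so `𝔛 = [m]^𝔖` for `𝔖 = {diffSet '' R | R ∈ 𝔛}`; since `𝔛 ≤ Ham(m, d)`, all sets
in a cell of `𝔖` have the same size.

For the triangle condition fix `(u, v)` with difference set `a`. The number of `w` with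
difference sets `b` from `u` and `c` to `v` is `0` unless `(a, b, c)` is a triangle, and is
otherwise `(m - 1)^k (m - 2)^j` with `k = |(b ∩ c) \ a|`, `j = |a ∩ b ∩ c|` and
`2k + j = |b| + |c| - |a|`. Coherence of `𝔛` thus makes `∑ₖ Nₖ(a) (m - 1)^k (m - 2)^(s - 2k)`
constant on a cell `α`, where `Nₖ(a)` counts the triangles `(a, b, c)` with `b ∈ β`, `c ∈ γ` and
parameter `k`. As `Nₖ(a) ≤ 3^d` and `(3^d + 1)(m - 1) < (m - 2)^2`, the `Nₖ(a)` are read off this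
sum like digits; and once the sizes of its sides are fixed, the type of a triangle is determined
by `k`.
-/

namespace Paper


def diag (V : Type*) : Set (V × V) := {p | p.1 = p.2}

def IsCoherent {V : Type*} (X : Set (Set (V × V))) : Prop :=
  ∀ R ∈ X, ∀ S ∈ X, ∀ T ∈ X, ∃ p : ℕ, ∀ q : V × V, q ∈ R →
    {w : V | (q.1, w) ∈ S ∧ (w, q.2) ∈ T}.ncard = p

def IsAssocScheme {V : Type*} (X : Set (Set (V × V))) : Prop :=
  Setoid.IsPartition X ∧ diag V ∈ X ∧
  (∀ R ∈ X, ∀ x y : V, (x, y) ∈ R → (y, x) ∈ R) ∧ IsCoherent X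

def cellGraph {V : Type*} (R : Set (V × V)) : SimpleGraph V :=
  SimpleGraph.fromRel (fun x y => (x, y) ∈ R)

def IsPrimitiveScheme {V : Type*} (X : Set (Set (V × V))) : Prop :=
  ∀ R ∈ X, R ≠ diag V → (cellGraph R).Connected

def schemeAut {V : Type*} (X : Set (Set (V × V))) : Subgroup (Equiv.Perm V) where
  carrier := {g | ∀ R ∈ X, ∀ x y : V, (x, y) ∈ R ↔ (g x, g y) ∈ R}
  one_mem' := by intro R _ x y; simp
  mul_mem' := by
    intro g h hg hh R hR x y
    have := (hh R hR x y).trans (hg R hR (h x) (h y))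
    simpa using this
  inv_mem' := by
    intro g hg R hR x y
    have := (hg R hR (g⁻¹ x) (g⁻¹ y)).symm
    simpa using this

def IsTriangle {Ω : Type*} (a b c : Set Ω) : Prop :=
  a ⊆ b ∪ c ∧ b ⊆ a ∪ c ∧ c ⊆ a ∪ b

noncomputable def tripleType {Ω : Type*} (a b c : Set Ω) : ℕ × ℕ × ℕ × ℕ × ℕ × ℕ × ℕ :=
  (a.ncard, b.ncard, c.ncard, (a ∩ b).ncard, (a ∩ c).ncard, (b ∩ c).ncard, (a ∩ b ∩ c).ncard)

noncomputable def typeCount {Ω : Type*} (β γ : Set (Set Ω)) (a : Set Ω) (τ : ℕ × ℕ × ℕ × ℕ × ℕ × ℕ × ℕ) : ℕ :=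
  {p : Set Ω × Set Ω | p.1 ∈ β ∧ p.2 ∈ γ ∧ tripleType a p.1 p.2 = τ}.ncard

def IsSAS {Ω : Type*} (S : Set (Set (Set Ω))) : Prop :=
  Setoid.IsPartition S ∧
  (∀ α ∈ S, ∀ a ∈ α, ∀ a' ∈ α, Set.ncard a = Set.ncard a') ∧
  (∀ α ∈ S, ∀ β ∈ S, ∀ γ ∈ S, ∀ a ∈ α, ∀ a' ∈ α,
    ∀ t₁ t₂ t₃ : Set Ω, IsTriangle t₁ t₂ t₃ →
      typeCount β γ a (tripleType t₁ t₂ t₃) = typeCount β γ a' (tripleType t₁ t₂ t₃))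

def SetHomog {Ω : Type*} (S : Set (Set (Set Ω))) : Prop :=
  {a : Set Ω | ∃ v : Ω, a = {v}} ∈ S

def diffSet {m d : ℕ} (p : (Fin d → Fin m) × (Fin d → Fin m)) : Set (Fin d) :=
  {i | p.1 i ≠ p.2 i}

def relOf (m d : ℕ) (α : Set (Set (Fin d))) : Set ((Fin d → Fin m) × (Fin d → Fin m)) :=
  {p | diffSet p ∈ α}

def mPow (m d : ℕ) (S : Set (Set (Set (Fin d)))) :
    Set (Set ((Fin d → Fin m) × (Fin d → Fin m))) :=
  {R | R.Nonempty ∧ ∃ α ∈ S, R = relOf m d α}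

def tensorTrivial (m d : ℕ) : Set (Set ((Fin d → Fin m) × (Fin d → Fin m))) :=
  {R | R.Nonempty ∧ ∃ a : Set (Fin d), R = {p | diffSet p = a}}

def hammingScheme (m d : ℕ) : Set (Set ((Fin d → Fin m) × (Fin d → Fin m))) :=
  {R | R.Nonempty ∧ ∃ t : ℕ, R = {p | (diffSet p).ncard = t}}

def Refines {W : Type*} (X X' : Set (Set W)) : Prop :=
  ∀ R ∈ X, ∃ R' ∈ X', R ⊆ R'

open Finset

lemma mul_sum_range_succ_lt {B : ℕ} {v : ℕ → ℕ} (hpos : ∀ k, 0 < v k) :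
    ∀ {n : ℕ}, (∀ k, k + 1 ≤ n → (B + 1) * v (k + 1) < v k) →
      B * ∑ k ∈ range n, v (k + 1) < v 0
  | 0, _ => by simpa using hpos 0
  | n + 1, hv => by
    have ih := mul_sum_range_succ_lt (v := fun k => v (k + 1)) (fun k => hpos (k + 1))
      (n := n) (fun k hk => hv (k + 1) (by omega))
    have h0 := hv 0 (by omega)
    rw [sum_range_succ']
    nlinarith

lemma eq_of_sum_range_mul_eq {B : ℕ} :
    ∀ {n : ℕ} {v N N' : ℕ → ℕ}, (∀ k, 0 < v k) → (∀ k, k + 2 ≤ n → (B + 1) * v (k + 1) < v k) →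
      (∀ k, N k ≤ B) → (∀ k, N' k ≤ B) →
      ∑ k ∈ range n, N k * v k = ∑ k ∈ range n, N' k * v k → ∀ k < n, N k = N' k
  | 0, _, _, _, _, _, _, _, _ => by simp
  | n + 1, v, N, N', hpos, hv, hN, hN', h => by
    have htail : ∀ M : ℕ → ℕ, (∀ k, M k ≤ B) → ∑ k ∈ range n, M (k + 1) * v (k + 1) < v 0 := by
      intro M hM
      refine lt_of_le_of_lt ?_ (mul_sum_range_succ_lt hpos (n := n) fun k hk => hv k (by omega))
      rw [mul_sum]
      exact sum_le_sum fun k _ => Nat.mul_le_mul_right _ (hM _)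
    rw [sum_range_succ', sum_range_succ'] at h
    -- the tail is smaller than `v 0`, so `N 0` is the quotient of the sum by `v 0`
    have h0 : N 0 = N' 0 := by
      have hq := congrArg (· / v 0) h
      simp only [Nat.add_mul_div_right _ _ (hpos 0), Nat.div_eq_of_lt (htail N hN),
        Nat.div_eq_of_lt (htail N' hN'), zero_add] at hq
      exact hq
    have ih := eq_of_sum_range_mul_eq (n := n) (v := fun k => v (k + 1)) (N := fun k => N (k + 1))
      (N' := fun k => N' (k + 1)) (fun k => hpos _) (fun k hk => hv (k + 1) (by omega))
      (fun k => hN _) (fun k => hN' _) (by rw [h0] at h; simpa using h)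
    rintro (_ | k) hk
    · exact h0
    · exact ih k (by omega)

lemma succ_mul_sub_one_lt_sub_two_sq {B m : ℕ} (hm : B + 4 ≤ m) :
    (B + 1) * (m - 1) < (m - 2) ^ 2 := by
  obtain ⟨q, rfl⟩ : ∃ q, m = q + 4 := ⟨m - 4, by omega⟩
  simp only [show q + 4 - 1 = q + 3 by omega, show q + 4 - 2 = q + 2 by omega]
  nlinarith

section TriangleCardinalities

variable {Ω : Type*} [Finite Ω]

lemma subset_union_iff_ncard (a b c : Set Ω) :
    a ⊆ b ∪ c ↔ (a ∩ b).ncard + (a ∩ c).ncard = a.ncard + (a ∩ b ∩ c).ncard := by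
  have hunion := Set.ncard_union_add_ncard_inter (a ∩ b) (a ∩ c)
  rw [← Set.inter_union_distrib_left,
    show a ∩ b ∩ (a ∩ c) = a ∩ b ∩ c by ext; simp; tauto] at hunion
  rw [← Set.inter_eq_left]
  constructor
  · intro h
    rw [h] at hunion
    omega
  · intro h
    exact Set.eq_of_subset_of_ncard_le Set.inter_subset_left (by omega)

lemma isTriangle_iff_ncard (a b c : Set Ω) :
    IsTriangle a b c ↔
      (a ∩ b).ncard + (a ∩ c).ncard = a.ncard + (a ∩ b ∩ c).ncard ∧
      (a ∩ b).ncard + (b ∩ c).ncard = b.ncard + (a ∩ b ∩ c).ncard ∧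
      (a ∩ c).ncard + (b ∩ c).ncard = c.ncard + (a ∩ b ∩ c).ncard := by
  rw [IsTriangle, subset_union_iff_ncard a, subset_union_iff_ncard b, subset_union_iff_ncard c,
    Set.inter_comm b a, Set.inter_comm c a, Set.inter_comm c b, Set.inter_right_comm a c b]

lemma ncard_inter_eq_ncard_diff_add (a b c : Set Ω) :
    (b ∩ c).ncard = ((b ∩ c) \ a).ncard + (a ∩ b ∩ c).ncard := by
  rw [← Set.ncard_inter_add_ncard_sdiff_eq_ncard (b ∩ c) a, add_comm,
    show b ∩ c ∩ a = a ∩ b ∩ c by ext; simp; tauto]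

lemma IsTriangle.ncard_eq {a b c : Set Ω} (h : IsTriangle a b c) :
    (a ∩ b).ncard + ((b ∩ c) \ a).ncard = b.ncard ∧
    (a ∩ c).ncard + ((b ∩ c) \ a).ncard = c.ncard ∧
    2 * ((b ∩ c) \ a).ncard + (a ∩ b ∩ c).ncard + a.ncard = b.ncard + c.ncard := by
  have := (isTriangle_iff_ncard a b c).mp h
  have := ncard_inter_eq_ncard_diff_add a b c
  omega

lemma tripleType_eq_iff {a b c t₁ t₂ t₃ : Set Ω} (ht : IsTriangle t₁ t₂ t₃)
    (ha : a.ncard = t₁.ncard) (hb : b.ncard = t₂.ncard) (hc : c.ncard = t₃.ncard) :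
    tripleType a b c = tripleType t₁ t₂ t₃ ↔
      IsTriangle a b c ∧ ((b ∩ c) \ a).ncard = ((t₂ ∩ t₃) \ t₁).ncard := by
  have := ncard_inter_eq_ncard_diff_add a b c
  have := ncard_inter_eq_ncard_diff_add t₁ t₂ t₃
  have := ht.ncard_eq
  simp only [tripleType, Prod.mk.injEq]
  constructor
  · rintro ⟨-, -, -, hab, hac, hbc, habc⟩
    refine ⟨(isTriangle_iff_ncard a b c).mpr ?_, by omega⟩
    have := (isTriangle_iff_ncard t₁ t₂ t₃).mp ht
    omega
  · rintro ⟨h, hk⟩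
    have := h.ncard_eq
    omega

end TriangleCardinalities

lemma card_filter_ne_iff_and_ne_iff {α : Type*} [Fintype α] [DecidableEq α] (x y : α)
    (pb pc : Prop) [Decidable pb] [Decidable pc] :
    #{z | (x ≠ z ↔ pb) ∧ (z ≠ y ↔ pc)} =
      if (x ≠ y → pb ∨ pc) ∧ (pb → x ≠ y ∨ pc) ∧ (pc → x ≠ y ∨ pb) then
        (if x = y ∧ pb ∧ pc then Fintype.card α - 1 else 1) *
          (if x ≠ y ∧ pb ∧ pc then Fintype.card α - 2 else 1)
      else 0 := by
  by_cases hxy : x = y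
  · subst hxy
    by_cases hb : pb <;> by_cases hc : pc <;>
      simp [hb, hc, filter_not, filter_eq', eq_comm (a := x), card_univ_sdiff]
  · have hyx : y ∈ ({x}ᶜ : Finset α) := by simpa [eq_comm] using hxy
    by_cases hb : pb <;> by_cases hc : pc <;>
      simp [hb, hc, hxy, filter_and, filter_not, filter_eq', eq_comm (a := x),
        ← compl_eq_univ_sdiff, ← compl_union, card_compl, Nat.sub_sub, inter_singleton_of_mem hyx]

open Classical in
noncomputable def midpointCount (m : ℕ) {Ω : Type*} (a b c : Set Ω) : ℕ :=
  if IsTriangle a b c then (m - 1) ^ ((b ∩ c) \ a).ncard * (m - 2) ^ (a ∩ b ∩ c).ncard else 0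

lemma ncard_midpoints {m d : ℕ} (u v : Fin d → Fin m) (b c : Set (Fin d)) :
    {w | diffSet (u, w) = b ∧ diffSet (w, v) = c}.ncard = midpointCount m (diffSet (u, v)) b c := by
  classical
  have hfiber : {w | diffSet (u, w) = b ∧ diffSet (w, v) = c} =
      ↑(Fintype.piFinset fun i => {z | (u i ≠ z ↔ i ∈ b) ∧ (z ≠ v i ↔ i ∈ c)}) := by
    ext w
    simp [diffSet, Set.ext_iff, forall_and]
  have hcard : ∀ s : Set (Fin d), #{i | i ∈ s} = s.ncard := fun s => by
    rw [← Set.ncard_coe_finset]; simp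
  rw [hfiber, Set.ncard_coe_finset, Fintype.card_piFinset]
  simp_rw [card_filter_ne_iff_and_ne_iff, Fintype.card_fin]
  have htri : IsTriangle (diffSet (u, v)) b c ↔
      ∀ i, (u i ≠ v i → i ∈ b ∨ i ∈ c) ∧ (i ∈ b → u i ≠ v i ∨ i ∈ c) ∧
        (i ∈ c → u i ≠ v i ∨ i ∈ b) := by
    simp only [IsTriangle, Set.subset_def, ← forall_and]; rfl
  rw [midpointCount]
  split_ifs with h
  · rw [prod_congr rfl fun i _ => if_pos (htri.mp h i), prod_mul_distrib]
    simp only [prod_ite, prod_const, one_pow, mul_one]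
    congr 2 <;> rw [← hcard] <;> congr 1 <;> ext i <;> simp [diffSet] <;> tauto
  · obtain ⟨i, hi⟩ := not_forall.mp (mt htri.mpr h)
    exact prod_eq_zero (mem_univ i) (if_neg hi)

open Classical in
lemma ncard_paths {m d : ℕ} (u v : Fin d → Fin m) (β γ : Set (Set (Fin d))) :
    {w | diffSet (u, w) ∈ β ∧ diffSet (w, v) ∈ γ}.ncard =
      ∑ bc ∈ {bc : Set (Fin d) × Set (Fin d) | bc.1 ∈ β ∧ bc.2 ∈ γ},
        midpointCount m (diffSet (u, v)) bc.1 bc.2 := by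
  classical
  let ends : (Fin d → Fin m) → Set (Fin d) × Set (Fin d) :=
    fun w => (diffSet (u, w), diffSet (w, v))
  set T : Finset (Set (Fin d) × Set (Fin d)) := {bc | bc.1 ∈ β ∧ bc.2 ∈ γ}
  have hpaths : {w | diffSet (u, w) ∈ β ∧ diffSet (w, v) ∈ γ} = ↑({w | ends w ∈ T} : Finset _) := by
    ext w; simp [ends, T]
  rw [hpaths, Set.ncard_coe_finset,
    card_eq_sum_card_fiberwise (s := {w | ends w ∈ T}) (t := T) fun w hw => by simpa using hw]
  refine sum_congr rfl fun ⟨b, c⟩ hbc => ?_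
  rw [← ncard_midpoints, ← Set.ncard_coe_finset]
  congr 1
  ext w
  simp only [coe_filter, mem_filter, mem_univ, true_and, Set.mem_ofPred_eq, ends, T] at hbc ⊢
  constructor
  · rintro ⟨-, h⟩; exact Prod.mk.inj h
  · rintro ⟨rfl, rfl⟩; exact ⟨hbc, rfl⟩

section TriangleCounts

variable {Ω : Type*} [Fintype Ω]

open Classical in
noncomputable def trianglePairs (β γ : Set (Set Ω)) (a : Set Ω) : Finset (Set Ω × Set Ω) :=
  {bc | bc.1 ∈ β ∧ bc.2 ∈ γ ∧ IsTriangle a bc.1 bc.2}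

open Classical in
noncomputable def triangleCount (β γ : Set (Set Ω)) (a : Set Ω) (k : ℕ) : ℕ :=
  #{bc ∈ trianglePairs β γ a | ((bc.1 ∩ bc.2) \ a).ncard = k}

lemma card_trianglePairs_le (β γ : Set (Set Ω)) (a : Set Ω) :
    #(trianglePairs β γ a) ≤ 3 ^ Fintype.card Ω := by
  classical
  -- Coordinatewise, a triangle on `a` avoids the pattern (i ∉ b, i ∉ c) inside `a`
  -- and (i ∈ b, i ∉ c) outside `a`.
  let forbidden : Ω → Bool × Bool := fun i => (decide (i ∉ a), false)
  let code : Set Ω × Set Ω → Ω → Bool × Bool := fun bc i => (decide (i ∈ bc.1), decide (i ∈ bc.2))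
  have hcode : Set.InjOn code (trianglePairs β γ a) := by
    intro bc _ bc' _ h
    have := fun i => congrFun h i
    simp only [code, Prod.mk.injEq, decide_eq_decide] at this
    exact Prod.ext (Set.ext fun i => (this i).1) (Set.ext fun i => (this i).2)
  calc #(trianglePairs β γ a)
      ≤ #(Fintype.piFinset fun i => ({forbidden i}ᶜ : Finset (Bool × Bool))) := by
        refine card_le_card_of_injOn code (fun bc hbc => ?_) hcode
        simp only [trianglePairs, coe_filter, mem_univ, true_and, Set.mem_ofPred_eq] at hbc
        obtain ⟨-, -, hab, hba, -⟩ := hbc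
        simp only [mem_coe, Fintype.mem_piFinset, mem_compl, mem_singleton, forbidden, code]
        intro i
        by_cases hi : i ∈ a
        · simpa [hi, or_iff_not_imp_left] using hab hi
        · simpa [hi] using @hba i
    _ = 3 ^ Fintype.card Ω := by simp [Fintype.card_piFinset, card_compl]

lemma triangleCount_le (β γ : Set (Set Ω)) (a : Set Ω) (k : ℕ) :
    triangleCount β γ a k ≤ 3 ^ Fintype.card Ω :=
  (card_filter_le _ _).trans (card_trianglePairs_le β γ a)

lemma two_mul_le_of_triangleCount_ne_zero {β γ : Set (Set Ω)} {B C : ℕ}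
    (hβ : ∀ b ∈ β, b.ncard = B) (hγ : ∀ c ∈ γ, c.ncard = C) {a : Set Ω} {k : ℕ}
    (hk : triangleCount β γ a k ≠ 0) : 2 * k ≤ B + C - a.ncard := by
  classical
  obtain ⟨⟨b, c⟩, hbc⟩ := card_ne_zero.mp hk
  simp only [trianglePairs, mem_filter, mem_univ, true_and] at hbc
  obtain ⟨⟨hb, hc, htri⟩, rfl⟩ := hbc
  have := htri.ncard_eq
  have := hβ b hb
  have := hγ c hc
  omega

open Classical in
lemma sum_midpointCount_eq (m : ℕ) {β γ : Set (Set Ω)} {B C : ℕ}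
    (hβ : ∀ b ∈ β, b.ncard = B) (hγ : ∀ c ∈ γ, c.ncard = C) (a : Set Ω) :
    ∑ bc ∈ {bc : Set Ω × Set Ω | bc.1 ∈ β ∧ bc.2 ∈ γ}, midpointCount m a bc.1 bc.2 =
      ∑ k ∈ range ((B + C - a.ncard) / 2 + 1),
        triangleCount β γ a k * ((m - 1) ^ k * (m - 2) ^ (B + C - a.ncard - 2 * k)) := by
  classical
  have hstats : ∀ bc ∈ trianglePairs β γ a,
      2 * ((bc.1 ∩ bc.2) \ a).ncard + (a ∩ bc.1 ∩ bc.2).ncard + a.ncard = B + C := by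
    intro bc hbc
    simp only [trianglePairs, mem_filter, mem_univ, true_and] at hbc
    rw [← hβ _ hbc.1, ← hγ _ hbc.2.1]
    exact hbc.2.2.ncard_eq.2.2
  set T : Finset (Set Ω × Set Ω) := {bc | bc.1 ∈ β ∧ bc.2 ∈ γ}
  have hsub : trianglePairs β γ a ⊆ T := fun bc hbc => by
    simp only [trianglePairs, T, mem_filter] at hbc ⊢
    exact ⟨hbc.1, hbc.2.1, hbc.2.2.1⟩
  have hzero : ∀ bc ∈ T, bc ∉ trianglePairs β γ a → midpointCount m a bc.1 bc.2 = 0 :=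
    fun bc hbc hbc' => by
    simp only [trianglePairs, T, mem_filter] at hbc hbc'
    exact if_neg fun htri => hbc' ⟨hbc.1, hbc.2.1, hbc.2.2, htri⟩
  rw [← sum_subset hsub hzero,
    ← sum_fiberwise_of_maps_to (g := fun bc => ((bc.1 ∩ bc.2) \ a).ncard)
      (t := range ((B + C - a.ncard) / 2 + 1)) (fun bc hbc => by
        have := hstats bc hbc; rw [mem_range]; omega)]
  refine sum_congr rfl fun k _ => ?_
  rw [triangleCount, card_eq_sum_ones, sum_mul, one_mul]
  refine sum_congr rfl fun bc hbc => ?_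
  obtain ⟨htp, rfl⟩ := mem_filter.mp hbc
  have := hstats bc htp
  rw [midpointCount, if_pos (mem_filter.mp htp).2.2.2]
  congr 2
  omega

lemma triangleCount_eq_of_sum_eq {m : ℕ} (hm : 3 ^ Fintype.card Ω + 4 ≤ m)
    {β γ : Set (Set Ω)} {B C : ℕ}
    (hβ : ∀ b ∈ β, b.ncard = B) (hγ : ∀ c ∈ γ, c.ncard = C) {a a' : Set Ω}
    (ha : a.ncard = a'.ncard)
    (h : ∑ k ∈ range ((B + C - a.ncard) / 2 + 1),
        triangleCount β γ a k * ((m - 1) ^ k * (m - 2) ^ (B + C - a.ncard - 2 * k)) =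
      ∑ k ∈ range ((B + C - a.ncard) / 2 + 1),
        triangleCount β γ a' k * ((m - 1) ^ k * (m - 2) ^ (B + C - a.ncard - 2 * k))) :
    ∀ k, triangleCount β γ a k = triangleCount β γ a' k := by
  set s := B + C - a.ncard
  have hm4 : 4 ≤ m := (Nat.le_add_left 4 _).trans hm
  have hpos : ∀ i j, 0 < (m - 1) ^ i * (m - 2) ^ j := fun i j =>
    Nat.mul_pos (pow_pos (by omega) i) (pow_pos (by omega) j)
  -- consecutive weights differ by the factor `(m - 2) ^ 2 / (m - 1)`, which exceeds `3 ^ |Ω| + 1`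
  have hchain : ∀ k, k + 2 ≤ s / 2 + 1 → (3 ^ Fintype.card Ω + 1) *
      ((m - 1) ^ (k + 1) * (m - 2) ^ (s - 2 * (k + 1))) < (m - 1) ^ k * (m - 2) ^ (s - 2 * k) := by
    intro k hk
    calc (3 ^ Fintype.card Ω + 1) * ((m - 1) ^ (k + 1) * (m - 2) ^ (s - 2 * (k + 1)))
        = ((3 ^ Fintype.card Ω + 1) * (m - 1)) * ((m - 1) ^ k * (m - 2) ^ (s - 2 * (k + 1))) := by
          ring
      _ < (m - 2) ^ 2 * ((m - 1) ^ k * (m - 2) ^ (s - 2 * (k + 1))) :=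
          Nat.mul_lt_mul_of_pos_right (succ_mul_sub_one_lt_sub_two_sq hm) (hpos _ _)
      _ = (m - 1) ^ k * (m - 2) ^ (s - 2 * k) := by
          rw [show s - 2 * k = s - 2 * (k + 1) + 2 by omega, pow_add]; ring
  intro k
  by_cases hk : k < s / 2 + 1
  · exact eq_of_sum_range_mul_eq (fun k => hpos _ _) hchain (triangleCount_le β γ a)
      (triangleCount_le β γ a') h k hk
  · have hzero : ∀ a₀ : Set Ω, a₀.ncard = a.ncard → triangleCount β γ a₀ k = 0 := by
      intro a₀ ha₀
      by_contra hne
      have := two_mul_le_of_triangleCount_ne_zero hβ hγ hne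
      omega
    rw [hzero a rfl, hzero a' ha.symm]

end TriangleCounts

section TypeCounts

variable {Ω : Type*} [Fintype Ω] {β γ : Set (Set Ω)} {a t₁ t₂ t₃ : Set Ω}

lemma typeCount_tripleType (ht : IsTriangle t₁ t₂ t₃) (hβ : ∀ b ∈ β, b.ncard = t₂.ncard)
    (hγ : ∀ c ∈ γ, c.ncard = t₃.ncard) (ha : a.ncard = t₁.ncard) :
    typeCount β γ a (tripleType t₁ t₂ t₃) = triangleCount β γ a ((t₂ ∩ t₃) \ t₁).ncard := by
  classical
  rw [typeCount, triangleCount, ← Set.ncard_coe_finset]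
  congr 1
  ext ⟨b, c⟩
  simp only [trianglePairs, coe_filter, mem_filter, mem_univ, true_and, Set.mem_ofPred_eq]
  constructor
  · rintro ⟨hb, hc, htype⟩
    obtain ⟨htri, hk⟩ := (tripleType_eq_iff ht ha (hβ b hb) (hγ c hc)).mp htype
    exact ⟨⟨hb, hc, htri⟩, hk⟩
  · rintro ⟨⟨hb, hc, htri⟩, hk⟩
    exact ⟨hb, hc, (tripleType_eq_iff ht ha (hβ b hb) (hγ c hc)).mpr ⟨htri, hk⟩⟩

lemma typeCount_tripleType_eq_zero {B C : ℕ} (hβ : ∀ b ∈ β, b.ncard = B)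
    (hγ : ∀ c ∈ γ, c.ncard = C) (h : ¬(a.ncard = t₁.ncard ∧ B = t₂.ncard ∧ C = t₃.ncard)) :
    typeCount β γ a (tripleType t₁ t₂ t₃) = 0 := by
  rw [typeCount, Set.ncard_eq_zero, Set.eq_empty_iff_forall_notMem]
  rintro ⟨b, c⟩ ⟨hb, hc, htype⟩
  simp only [tripleType, Prod.mk.injEq] at htype
  exact h ⟨htype.1, hβ b hb ▸ htype.2.1, hγ c hc ▸ htype.2.2.1⟩

lemma typeCount_eq_of_triangleCount_eq {B C : ℕ} (hβ : ∀ b ∈ β, b.ncard = B)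
    (hγ : ∀ c ∈ γ, c.ncard = C) {a' : Set Ω} (ha : a.ncard = a'.ncard)
    (hcount : ∀ k, triangleCount β γ a k = triangleCount β γ a' k) (ht : IsTriangle t₁ t₂ t₃) :
    typeCount β γ a (tripleType t₁ t₂ t₃) = typeCount β γ a' (tripleType t₁ t₂ t₃) := by
  by_cases hsize : a.ncard = t₁.ncard ∧ B = t₂.ncard ∧ C = t₃.ncard
  · obtain ⟨ha₁, rfl, rfl⟩ := hsize
    rw [typeCount_tripleType ht hβ hγ ha₁, typeCount_tripleType ht hβ hγ (ha ▸ ha₁), hcount]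
  · rw [typeCount_tripleType_eq_zero hβ hγ hsize, typeCount_tripleType_eq_zero hβ hγ (ha ▸ hsize)]

end TypeCounts

section SchemesBetweenTensorAndHamming

variable {m d : ℕ} {X : Set (Set ((Fin d → Fin m) × (Fin d → Fin m)))}
  {R Rα Rβ Rγ : Set ((Fin d → Fin m) × (Fin d → Fin m))}

lemma exists_diffSet_eq (hm : 2 ≤ m) (a : Set (Fin d)) :
    ∃ p : (Fin d → Fin m) × (Fin d → Fin m), diffSet p = a := by
  classical
  refine ⟨(fun _ => ⟨0, by omega⟩, fun i => if i ∈ a then ⟨1, by omega⟩ else ⟨0, by omega⟩), ?_⟩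
  ext i
  by_cases hi : i ∈ a <;> simp [diffSet, hi]

lemma mem_of_diffSet_eq (hX : Setoid.IsPartition X) (hT : Refines (tensorTrivial m d) X)
    (hR : R ∈ X) {p q : (Fin d → Fin m) × (Fin d → Fin m)} (hp : p ∈ R)
    (hq : diffSet q = diffSet p) : q ∈ R := by
  obtain ⟨R', hR', hsub⟩ := hT {r | diffSet r = diffSet p} ⟨⟨p, rfl⟩, _, rfl⟩
  rw [← Setoid.eq_of_mem_eqv_class hX.2 hR' (hsub rfl) hR hp]
  exact hsub hq

lemma relOf_image_diffSet (hX : Setoid.IsPartition X) (hT : Refines (tensorTrivial m d) X)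
    (hR : R ∈ X) : relOf m d (diffSet '' R) = R := by
  ext q
  constructor
  · rintro ⟨p, hp, hpq⟩
    exact mem_of_diffSet_eq hX hT hR hp hpq.symm
  · intro hq
    exact ⟨q, hq, rfl⟩

lemma isPartition_image_diffSet (hm : 2 ≤ m) (hX : Setoid.IsPartition X)
    (hT : Refines (tensorTrivial m d) X) : Setoid.IsPartition (Set.image diffSet '' X) := by
  refine ⟨fun ⟨R, hR, hempty⟩ => hX.1 (Set.image_eq_empty.mp hempty ▸ hR), fun a => ?_⟩
  obtain ⟨p, rfl⟩ := exists_diffSet_eq hm a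
  obtain ⟨R, ⟨hR, hp⟩, -⟩ := hX.2 p
  refine ⟨diffSet '' R, ⟨⟨R, hR, rfl⟩, p, hp, rfl⟩, ?_⟩
  rintro _ ⟨⟨R', hR', rfl⟩, q, hq, hqp⟩
  rw [Setoid.eq_of_mem_eqv_class hX.2 hR' (mem_of_diffSet_eq hX hT hR' hq hqp.symm) hR hp]

lemma eq_mPow_image_diffSet (hX : Setoid.IsPartition X) (hT : Refines (tensorTrivial m d) X) :
    X = mPow m d (Set.image diffSet '' X) := by
  ext R
  constructor
  · intro hR
    exact ⟨Set.nonempty_iff_ne_empty.mpr fun h => hX.1 (h ▸ hR), diffSet '' R, ⟨R, hR, rfl⟩,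
      (relOf_image_diffSet hX hT hR).symm⟩
  · rintro ⟨-, _, ⟨R, hR, rfl⟩, rfl⟩
    rwa [relOf_image_diffSet hX hT hR]

lemma ncard_image_diffSet (hH : Refines X (hammingScheme m d)) (hR : R ∈ X) :
    ∃ t, ∀ b ∈ diffSet '' R, b.ncard = t := by
  obtain ⟨_, ⟨-, t, rfl⟩, hsub⟩ := hH R hR
  exact ⟨t, by rintro _ ⟨p, hp, rfl⟩; exact hsub hp⟩

lemma triangleCount_image_diffSet_eq (hm : 3 ^ d + 4 ≤ m) (hX : Setoid.IsPartition X)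
    (hT : Refines (tensorTrivial m d) X) (hH : Refines X (hammingScheme m d)) (hcoh : IsCoherent X)
    (hRα : Rα ∈ X) (hRβ : Rβ ∈ X) (hRγ : Rγ ∈ X) {a a' : Set (Fin d)}
    (ha : a ∈ diffSet '' Rα) (ha' : a' ∈ diffSet '' Rα) (k : ℕ) :
    triangleCount (diffSet '' Rβ) (diffSet '' Rγ) a k =
      triangleCount (diffSet '' Rβ) (diffSet '' Rγ) a' k := by
  obtain ⟨A, hA⟩ := ncard_image_diffSet hH hRα
  obtain ⟨B, hB⟩ := ncard_image_diffSet hH hRβ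
  obtain ⟨C, hC⟩ := ncard_image_diffSet hH hRγ
  obtain ⟨q, hq⟩ := hcoh Rα hRα Rβ hRβ Rγ hRγ
  have hsum : ∀ a ∈ diffSet '' Rα, ∑ k ∈ range ((B + C - A) / 2 + 1),
      triangleCount (diffSet '' Rβ) (diffSet '' Rγ) a k *
        ((m - 1) ^ k * (m - 2) ^ (B + C - A - 2 * k)) = q := by
    rintro _ ⟨p, hp, rfl⟩
    rw [← hA _ ⟨p, hp, rfl⟩, ← sum_midpointCount_eq m hB hC, ← ncard_paths, ← hq p hp]
    conv_rhs => rw [← relOf_image_diffSet hX hT hRβ, ← relOf_image_diffSet hX hT hRγ]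
    rfl
  refine triangleCount_eq_of_sum_eq (by simpa using hm) hB hC ((hA a ha).trans (hA a' ha').symm)
    ?_ k
  rw [hA a ha, hsum a ha, hsum a' ha']

end SchemesBetweenTensorAndHamming

theorem stmt5_general (m d : ℕ) (hm : 3 ^ d + 4 ≤ m)
    (X : Set (Set ((Fin d → Fin m) × (Fin d → Fin m))))
    (hX : IsAssocScheme X)
    (h1 : Refines (tensorTrivial m d) X) (h2 : Refines X (hammingScheme m d)) :
    ∃ S : Set (Set (Set (Fin d))), IsSAS S ∧ X = mPow m d S := by
  obtain ⟨hpart, -, -, hcoh⟩ := hX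
  have hm2 : 2 ≤ m := le_trans (by norm_num) ((Nat.le_add_left 4 _).trans hm)
  refine ⟨Set.image diffSet '' X, ⟨isPartition_image_diffSet hm2 hpart h1, ?_, ?_⟩,
    eq_mPow_image_diffSet hpart h1⟩
  · rintro _ ⟨R, hR, rfl⟩ a ha a' ha'
    obtain ⟨t, ht⟩ := ncard_image_diffSet h2 hR
    rw [ht a ha, ht a' ha']
  · rintro _ ⟨Rα, hRα, rfl⟩ _ ⟨Rβ, hRβ, rfl⟩ _ ⟨Rγ, hRγ, rfl⟩ a ha a' ha' t₁ t₂ t₃ ht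
    obtain ⟨A, hA⟩ := ncard_image_diffSet h2 hRα
    obtain ⟨B, hB⟩ := ncard_image_diffSet h2 hRβ
    obtain ⟨C, hC⟩ := ncard_image_diffSet h2 hRγ
    exact typeCount_eq_of_triangleCount_eq hB hC ((hA a ha).trans (hA a' ha').symm)
      (triangleCount_image_diffSet_eq hm hpart h1 h2 hcoh hRα hRβ hRγ ha ha') ht

theorem stmt5 (m d : ℕ) (hd : 1 ≤ d) (hm : 3 ^ d + 4 ≤ m)
    (X : Set (Set ((Fin d → Fin m) × (Fin d → Fin m))))
    (hX : IsAssocScheme X)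
    (h1 : Refines (tensorTrivial m d) X) (h2 : Refines X (hammingScheme m d)) :
    ∃ S : Set (Set (Set (Fin d))), IsSAS S ∧ X = mPow m d S :=
  stmt5_general m d hm X hX h1 h2

end Paper
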